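/- arXiv:1803.05141 — 3 statements merged into one kernel-verified Lean document; each statement's English description precedes it below -/
import Mathlib

section
/- For natural numbers m ≥ 1 and n ≥ 1, B_m divides B_n if and only if m divides n, where B is the balancing sequence. -/
def B : ℕ → ℕ
  | 0 => 0
  | 1 => 1
  | (n + 2) => 6 * B (n + 1) - B n

/-!
`B n` is the `y`-component of `(3 + √8)ⁿ = xₙ + yₙ√8`, the `n`-th solution of Pell's equation
`x² - 8y² = 1`: both sequences satisfy `u (n + 2) = 6 u (n + 1) - u n` with the same initial
values. The divisibility property of these `yₙ` is `Pell.y_dvd_iff`.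
-/

theorem B_eq_pell_yn : ∀ n : ℕ, B n = Pell.yn (by norm_num : 1 < 3) n
  | 0 => (Pell.yn_zero _).symm
  | 1 => (Pell.yn_one _).symm
  | n + 2 => by
    have hrec := Pell.yn_succ_succ (by norm_num : 1 < 3) n
    rw [B, B_eq_pell_yn (n + 1), B_eq_pell_yn n]
    omega

theorem stmt2 : ∀ m n : ℕ, 1 ≤ m → 1 ≤ n → (B m ∣ B n ↔ m ∣ n) := by
  intro m n _ _
  rw [B_eq_pell_yn, B_eq_pell_yn]
  exact Pell.y_dvd_iff _ m n
end

section
/- For all natural numbers m and n, gcd(B_m, B_n) = B_{gcd(m,n)}, where B is the balancing sequence. -/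
namespace Nat

variable {f : ℕ → ℕ}

theorem gcd_apply_add_of_modEq (hcop : ∀ n, Coprime (f n) (f (n + 1)))
    (hadd : ∀ m n, f (n + m) ≡ f (m + 1) * f n [MOD f m]) (m n : ℕ) :
    gcd (f m) (f (n + m)) = gcd (f m) (f n) := by
  rw [gcd_comm, (hadd m n).gcd_eq, Coprime.gcd_mul_left_cancel _ (hcop m).symm, gcd_comm]

theorem gcd_apply_add_mul_of_modEq (hcop : ∀ n, Coprime (f n) (f (n + 1)))
    (hadd : ∀ m n, f (n + m) ≡ f (m + 1) * f n [MOD f m]) (m n : ℕ) :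
    ∀ k, gcd (f m) (f (n + k * m)) = gcd (f m) (f n)
  | 0 => by simp
  | k + 1 => by
    rw [← gcd_apply_add_mul_of_modEq hcop hadd m n k, add_mul, ← add_assoc, one_mul,
      gcd_apply_add_of_modEq hcop hadd]

theorem IsStrongDvdSequence.of_modEq (h0 : f 0 = 0) (hcop : ∀ n, Coprime (f n) (f (n + 1)))
    (hadd : ∀ m n, f (n + m) ≡ f (m + 1) * f n [MOD f m]) : IsStrongDvdSequence f := by
  intro m n
  induction m, n using Nat.gcd.induction with
  | H0 n => simp [h0]
  | H1 m n _ ih =>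
    rw [gcd_rec m n, ← ih, gcd_comm (f (n % m)),
      ← gcd_apply_add_mul_of_modEq hcop hadd m (n % m) (n / m), mod_add_div']

end Nat

theorem B_le_B_succ : ∀ n, B n ≤ B (n + 1)
  | 0 => by simp [B]
  | n + 1 => by
    have := B_le_B_succ n
    rw [B]
    omega

theorem B_add_two_add (n : ℕ) : B (n + 2) + B n = 6 * B (n + 1) := by
  have := B_le_B_succ n
  rw [B]
  omega

theorem B_add_two_int (n : ℕ) : (B (n + 2) : ℤ) = 6 * B (n + 1) - B n := by
  rw [eq_sub_iff_add_eq]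
  exact_mod_cast B_add_two_add n

theorem B_add_add_one : ∀ m n, B (m + n + 1) + B m * B n = B (m + 1) * B (n + 1)
  | 0, n => by simp [B]
  | 1, n => by
    rw [show 1 + n + 1 = n + 2 by omega]
    exact (one_mul (B n)).symm ▸ B_add_two_add n
  | m + 2, n => by
    have h0 := B_add_add_one m n
    have h1 := B_add_add_one (m + 1) n
    rw [show m + 1 + n + 1 = m + n + 1 + 1 by omega] at h1
    rw [show m + 2 + n + 1 = m + n + 1 + 2 by omega, show m + 2 + 1 = m + 1 + 2 by omega]
    zify at h0 h1 ⊢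
    linear_combination 6 * h1 - h0 + B_add_two_int (m + n + 1) + B n * B_add_two_int m
      - B (n + 1) * B_add_two_int (m + 1)

theorem B_add_modEq (m n : ℕ) : B (n + m) ≡ B (m + 1) * B n [MOD B m] := by
  cases n with
  | zero => simp [Nat.ModEq, B]
  | succ k =>
    rw [Nat.ModEq, add_right_comm, add_comm k m, ← B_add_add_one, Nat.add_mul_mod_self_left]

theorem coprime_B_B_succ : ∀ n, Nat.Coprime (B n) (B (n + 1))
  | 0 => by simp [B]
  | n + 1 => by
    rw [← Nat.isCoprime_iff_coprime, B_add_two_int]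
    have := (Nat.isCoprime_iff_coprime.mpr (coprime_B_B_succ n)).symm.neg_right
    simpa [sub_eq_add_neg, add_comm, mul_comm] using this.add_mul_left_right 6

theorem stmt3 : ∀ m n : ℕ, Nat.gcd (B m) (B n) = B (Nat.gcd m n) :=
  Nat.IsStrongDvdSequence.of_modEq rfl coprime_B_B_succ B_add_modEq
end

section
/- For every natural number n > 1, B_n has a primitive prime divisor, i.e., there exists a prime p dividing B_n such that p does not divide B_m for any 0 < m < n. -/
/-!
`B n` is the solution sequence `yₙ` of the Pell equation `x² - 8y² = 1`, i.e. `Pell.yn` for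
`a = 3`; we work with any `a ≥ 3`. Suppose `yₙ` has no primitive prime divisor. Every prime
`p ∣ yₙ` then has a rank of apparition `r < n`, and `v_p(y_m) = v_p(y_r) + v_p(m / r)` if `r ∣ m`,
`0` otherwise. Möbius inversion of this formula shows that `∏_{d ∣ n} y_{n/d}^{μ(d)}` divides `n`.
On the other hand `y_m (α - α⁻¹) = αᵐ - α⁻ᵐ` with `α = a + √(a² - 1) ≥ 4`, so that product is at
least `(14/15) α^{φ(n)}`, which exceeds `n` because `4^{φ(n)} ≥ 2n`.
-/

open ArithmeticFunction Finset
open scoped ArithmeticFunction.Moebius Nat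

theorem Nat.factorization_eq_of_modEq {p k u v : ℕ} (hp : p.Prime) (h : u ≡ v [MOD p ^ k])
    (hv : ¬ p ^ k ∣ v) : u.factorization p = v.factorization p := by
  have hv0 : v ≠ 0 := by rintro rfl; exact hv (dvd_zero _)
  have hu0 : u ≠ 0 := by rintro rfl; exact hv ((h.dvd_iff dvd_rfl).mp (dvd_zero _))
  have hiff : ∀ j ≤ k, j ≤ u.factorization p ↔ j ≤ v.factorization p := fun j hj => by
    rw [← hp.pow_dvd_iff_le_factorization hu0, ← hp.pow_dvd_iff_le_factorization hv0]
    exact h.dvd_iff (pow_dvd_pow p hj)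
  have hlt : v.factorization p < k := by
    by_contra! hk
    exact hv ((hp.pow_dvd_iff_le_factorization hv0).mpr hk)
  have := hiff (v.factorization p + 1) hlt
  have := hiff (v.factorization p) hlt.le
  omega

theorem Nat.sum_Icc_ite_pow_dvd_eq_factorization {p k J : ℕ} (hp : p.Prime) (hk : k ≠ 0)
    (hJ : k.factorization p ≤ J) :
    ∑ j ∈ Icc 1 J, (if p ^ j ∣ k then 1 else 0 : ℤ) = k.factorization p := by
  have : {j ∈ Icc 1 J | p ^ j ∣ k} = Icc 1 (k.factorization p) := by
    ext j
    simp only [mem_filter, mem_Icc, hp.pow_dvd_iff_le_factorization hk]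
    omega
  rw [sum_boole, this, Nat.card_Icc, Nat.add_sub_cancel]

theorem Nat.le_four_pow_sub_two {p : ℕ} (hp : 3 ≤ p) : p ≤ 4 ^ (p - 2) :=
  calc p ≤ 2 ^ (p - 1) := by have := Nat.lt_two_pow_self (n := p - 1); omega
    _ ≤ 2 ^ (2 * (p - 2)) := Nat.pow_le_pow_right (by norm_num) (by omega)
    _ = 4 ^ (p - 2) := by rw [pow_mul]; norm_num

theorem Nat.Prime.sub_one_mul_totient_le {p : ℕ} (hp : p.Prime) (m : ℕ) :
    (p - 1) * φ m ≤ φ (p * m) := by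
  by_cases h : p ∣ m
  · rw [Nat.totient_mul_of_prime_of_dvd hp h]
    exact Nat.mul_le_mul_right _ (Nat.sub_le p 1)
  · rw [Nat.totient_mul_of_prime_of_not_dvd hp h]

theorem Nat.four_mul_le_four_pow_totient_of_odd {m : ℕ} (hm : Odd m) : 4 * m ≤ 4 ^ φ m := by
  induction m using Nat.strong_induction_on with
  | _ m ih =>
    rcases eq_or_ne m 1 with rfl | hm1
    · simp
    obtain ⟨p, hp, k, rfl⟩ : ∃ p, p.Prime ∧ ∃ k, m = p * k :=
      ⟨m.minFac, Nat.minFac_prime hm1, Nat.minFac_dvd m⟩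
    have hk : Odd k := (Nat.odd_mul.mp hm).2
    have hp3 : 3 ≤ p := by
      have := hp.two_le
      have : p ≠ 2 := by rintro rfl; exact absurd (Nat.odd_mul.mp hm).1 (by decide)
      omega
    have hk0 : 0 < k := hk.pos
    have ihk := ih k (by nlinarith) hk
    have hp4 := Nat.le_four_pow_sub_two hp3
    calc 4 * (p * k) ≤ 4 * k * 4 ^ (p - 2) := by nlinarith
      _ ≤ 4 * k * (4 * k) ^ (p - 2) := by gcongr; omega
      _ = (4 * k) ^ (p - 1) := by rw [← pow_succ']; congr 1; omega
      _ ≤ (4 ^ φ k) ^ (p - 1) := by gcongr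
      _ = 4 ^ ((p - 1) * φ k) := by rw [← pow_mul, mul_comm]
      _ ≤ 4 ^ φ (p * k) := Nat.pow_le_pow_right (by norm_num) (hp.sub_one_mul_totient_le k)

theorem Nat.two_mul_le_four_pow_totient {n : ℕ} (hn : n ≠ 0) : 2 * n ≤ 4 ^ φ n := by
  obtain ⟨k, m, hm, rfl⟩ := Nat.exists_eq_two_pow_mul_odd hn
  have hodd := Nat.four_mul_le_four_pow_totient_of_odd hm
  rcases k with _ | j
  · rw [pow_zero, one_mul]
    omega
  have hφ : φ (2 ^ (j + 1) * m) = 2 ^ j * φ m := by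
    rw [Nat.totient_mul ((Nat.coprime_pow_left_iff j.succ_pos _ _).mpr
      (Nat.coprime_two_left.mpr hm)), Nat.totient_prime_pow_succ Nat.prime_two]
    simp
  have hφm : 1 ≤ φ m := Nat.totient_pos.mpr hm.pos
  have hexp : 2 ^ j + φ m ≤ 2 ^ j * φ m + 1 := by
    have : 1 ≤ 2 ^ j := Nat.one_le_two_pow
    nlinarith
  have h2j : 2 ^ (j + 2) ≤ 4 ^ 2 ^ j := by
    rw [show (4 : ℕ) = 2 ^ 2 by norm_num, ← pow_mul, ← pow_succ']
    exact Nat.pow_le_pow_right (by norm_num) Nat.lt_two_pow_self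
  have : 4 * (2 * (2 ^ (j + 1) * m)) ≤ 4 * 4 ^ φ (2 ^ (j + 1) * m) :=
    calc 4 * (2 * (2 ^ (j + 1) * m)) = 2 ^ (j + 2) * (4 * m) := by ring
      _ ≤ 4 ^ 2 ^ j * 4 ^ φ m := Nat.mul_le_mul h2j hodd
      _ = 4 ^ (2 ^ j + φ m) := (pow_add _ _ _).symm
      _ ≤ 4 ^ (2 ^ j * φ m + 1) := Nat.pow_le_pow_right (by norm_num) hexp
      _ = 4 * 4 ^ φ (2 ^ (j + 1) * m) := by rw [hφ, pow_succ, mul_comm]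
  omega

theorem Finset.one_sub_sum_le_prod_one_sub {ι R : Type*} [CommRing R] [LinearOrder R]
    [IsStrictOrderedRing R] (s : Finset ι) {x : ι → R} (h0 : ∀ i ∈ s, 0 ≤ x i)
    (h1 : ∀ i ∈ s, x i ≤ 1) : 1 - ∑ i ∈ s, x i ≤ ∏ i ∈ s, (1 - x i) := by
  classical
  induction s using Finset.induction_on with
  | empty => simp
  | insert j s hj ih =>
    rw [sum_insert hj, prod_insert hj]
    have hxj0 := h0 j (mem_insert_self j s)
    have hxj1 : 0 ≤ 1 - x j := sub_nonneg.mpr (h1 j (mem_insert_self j s))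
    have ih := ih (fun i hi => h0 i (mem_insert_of_mem hi)) fun i hi => h1 i (mem_insert_of_mem hi)
    have hsum : 0 ≤ ∑ i ∈ s, x i := sum_nonneg fun i hi => h0 i (mem_insert_of_mem hi)
    nlinarith [mul_le_mul_of_nonneg_left ih hxj1, mul_nonneg hxj0 hsum]

namespace ArithmeticFunction

theorem sum_divisors_moebius_mul_ite_dvd {n : ℕ} (hn : 0 < n) (s : ℕ) :
    ∑ d ∈ n.divisors, μ d * (if s ∣ n / d then 1 else 0) = if n = s then 1 else 0 := by
  have := (sum_eq_iff_sum_mul_moebius_eq (R := ℤ) (f := fun m => if m = s then 1 else 0)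
    (g := fun m => if s ∣ m then 1 else 0)).mp (fun m hm => ?_) n hn
  · simp only [Int.cast_id] at this
    rwa [Nat.sum_divisorsAntidiagonal (fun x y => μ x * if s ∣ y then 1 else 0)] at this
  · simp [Finset.sum_ite_eq', Nat.mem_divisors, hm.ne']

theorem sum_divisors_moebius_mul_div (n : ℕ) :
    ∑ d ∈ n.divisors, μ d * ((n / d : ℕ) : ℤ) = φ n := by
  rcases n.eq_zero_or_pos with rfl | hn
  · simp
  have := (sum_eq_iff_sum_mul_moebius_eq (R := ℤ) (f := fun m => (φ m : ℤ))
    (g := fun m => (m : ℤ))).mp (fun m _ => by exact_mod_cast Nat.sum_totient m) n hn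
  simp only [Int.cast_id] at this
  rwa [Nat.sum_divisorsAntidiagonal (fun x y => μ x * (y : ℤ))] at this

theorem sum_moebius_mul_eq_sub (s : Finset ℕ) (F : ℕ → ℤ) :
    ∑ d ∈ s, μ d * F d = ∑ d ∈ s with μ d = 1, F d - ∑ d ∈ s with μ d = -1, F d := by
  rw [sum_filter, sum_filter, ← sum_sub_distrib]
  refine sum_congr rfl fun d _ => ?_
  rcases moebius_eq_or d with h | h | h <;> simp [h]

theorem card_filter_moebius_eq_one_eq {n : ℕ} (hn : n ≠ 1) :
    #{d ∈ n.divisors | μ d = 1} = #{d ∈ n.divisors | μ d = -1} := by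
  rcases n.eq_zero_or_pos with rfl | hn0
  · rfl
  have h := sum_moebius_mul_eq_sub n.divisors fun _ => 1
  have h0 := sum_divisors_moebius_mul_ite_dvd hn0 1
  simp only [one_dvd, if_true, if_neg hn] at h0
  rw [h0, sum_const, sum_const, nsmul_one, nsmul_one] at h
  omega

theorem sum_filter_moebius_eq_one_div (n : ℕ) :
    ∑ d ∈ n.divisors with μ d = 1, n / d = φ n + ∑ d ∈ n.divisors with μ d = -1, n / d := by
  have h := sum_moebius_mul_eq_sub n.divisors fun d => ((n / d : ℕ) : ℤ)
  rw [sum_divisors_moebius_mul_div, ← Nat.cast_sum, ← Nat.cast_sum] at h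
  omega

theorem prod_filter_moebius_dvd {D : Finset ℕ} {f : ℕ → ℕ} {N : ℕ} (hf : ∀ d ∈ D, f d ≠ 0)
    (hN : N ≠ 0)
    (h : ∀ p, p.Prime → ∑ d ∈ D, μ d * ((f d).factorization p : ℤ) ≤ N.factorization p) :
    ∏ d ∈ D with μ d = 1, f d ∣ N * ∏ d ∈ D with μ d = -1, f d := by
  have hf' : ∀ t : ℤ, ∀ d ∈ D.filter (μ · = t), f d ≠ 0 := fun t d hd => hf d (mem_filter.mp hd).1
  rw [← Nat.factorization_le_iff_dvd (prod_ne_zero_iff.mpr (hf' 1))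
    (mul_ne_zero hN (prod_ne_zero_iff.mpr (hf' (-1))))]
  intro p
  by_cases hp : p.Prime
  · have := h p hp
    rw [sum_moebius_mul_eq_sub] at this
    rw [Nat.factorization_mul hN (prod_ne_zero_iff.mpr (hf' (-1))), Finsupp.add_apply,
      Nat.factorization_prod (hf' 1), Nat.factorization_prod (hf' (-1)),
      Finsupp.finsetSum_apply, Finsupp.finsetSum_apply]
    zify
    linarith
  · simp [Nat.factorization_eq_zero_of_not_prime _ hp]

-- On divisors of `n`, `w m = e [r ∣ m] + ∑_{1 ≤ j ≤ v_p(n)} [r pʲ ∣ m]`, and Möbius inversion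
-- turns each indicator `[s ∣ ·]` into `[· = s]`.
theorem sum_moebius_mul_factorization_le {p r n e : ℕ} (hp : p.Prime) (hn : 0 < n) (hrn : r ∣ n)
    (hr : r ≠ n) {w : ℕ → ℕ}
    (hw : ∀ m, m ∣ n → w m = if r ∣ m then e + (m / r).factorization p else 0) :
    ∑ d ∈ n.divisors, μ d * (w (n / d) : ℤ) ≤ n.factorization p := by
  set J := n.factorization p
  have hr0 : 0 < r := Nat.pos_of_dvd_of_pos hrn hn
  have hexp : ∀ m, m ∣ n → (w m : ℤ) =
      e * (if r ∣ m then 1 else 0) + ∑ j ∈ Icc 1 J, (if r * p ^ j ∣ m then 1 else 0) := by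
    intro m hm
    rw [hw m hm]
    split_ifs with hrm
    · obtain ⟨k, rfl⟩ := hrm
      have hk : k ≠ 0 := by rintro rfl; rw [mul_zero, zero_dvd_iff] at hm; omega
      simp_rw [Nat.mul_dvd_mul_iff_left hr0, Nat.mul_div_cancel_left k hr0]
      rw [Nat.sum_Icc_ite_pow_dvd_eq_factorization hp hk
        ((Nat.factorization_le_iff_dvd hk hn.ne').mpr ((Dvd.intro_left r rfl).trans hm) p)]
      push_cast
      ring
    · have : ∀ j, ¬ r * p ^ j ∣ m := fun j h => hrm ((Dvd.intro _ rfl).trans h)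
      simp [this]
  calc ∑ d ∈ n.divisors, μ d * (w (n / d) : ℤ)
      = e * (if n = r then 1 else 0) + ∑ j ∈ Icc 1 J, (if n = r * p ^ j then 1 else 0) := by
        rw [sum_congr rfl fun d hd => by
          rw [hexp _ (Nat.div_dvd_of_dvd (Nat.dvd_of_mem_divisors hd))]]
        simp only [mul_add, mul_sum, sum_add_distrib, mul_left_comm _ (e : ℤ)]
        rw [← mul_sum, sum_divisors_moebius_mul_ite_dvd hn, sum_comm]
        simp only [sum_divisors_moebius_mul_ite_dvd hn]
    _ ≤ ∑ j ∈ Icc 1 J, 1 := by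
        rw [if_neg (Ne.symm hr), mul_zero, zero_add]
        exact sum_le_sum fun j _ => by split_ifs <;> norm_num
    _ = J := by simp

end ArithmeticFunction

namespace Pell

variable {a : ℕ} (a1 : 1 < a)

theorem yn_pos {n : ℕ} (hn : 0 < n) : 0 < yn a1 n := hn.trans_le (yn_ge_n a1 n)

theorem not_dvd_xn_of_dvd_yn {p n : ℕ} (hp : p.Prime) (h : p ∣ yn a1 n) : ¬ p ∣ xn a1 n :=
  fun hx => hp.one_lt.ne' (Nat.eq_one_of_dvd_coprimes (xy_coprime a1 n) hx h)

theorem dvd_yn_gcd {k m n : ℕ} (hm : k ∣ yn a1 m) (hn : k ∣ yn a1 n) :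
    k ∣ yn a1 (Nat.gcd m n) := by
  induction m, n using Nat.gcd.induction with
  | H0 n => simpa using hn
  | H1 m n _ ih =>
    rw [Nat.gcd_rec]
    refine ih ?_ hm
    have hmq : k ∣ yn a1 (m * (n / m)) := hm.trans (y_mul_dvd a1 m _)
    have hcop : k.Coprime (xn a1 (m * (n / m))) :=
      ((xy_coprime a1 _).coprime_dvd_right hmq).symm
    rw [← Nat.mod_add_div n m, yn_add] at hn
    exact hcop.dvd_of_dvd_mul_right ((Nat.dvd_add_right (hmq.mul_left _)).mp hn)

-- `r` is the rank of apparition of `k`.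
theorem exists_dvd_yn_iff_dvd {k n : ℕ} (hn : 0 < n) (hk : k ∣ yn a1 n) :
    ∃ r, 0 < r ∧ r ≤ n ∧ ∀ m, k ∣ yn a1 m ↔ r ∣ m := by
  classical
  have hex : ∃ r, 0 < r ∧ k ∣ yn a1 r := ⟨n, hn, hk⟩
  obtain ⟨hr0, hr⟩ := Nat.find_spec hex
  refine ⟨Nat.find hex, hr0, Nat.find_min' hex ⟨hn, hk⟩, fun m =>
    ⟨fun hm => ?_, fun hm => hr.trans ((y_dvd_iff a1 _ _).mpr hm)⟩⟩
  have hg : 0 < Nat.gcd (Nat.find hex) m := Nat.gcd_pos_of_pos_left _ hr0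
  rw [← Nat.gcd_eq_left_iff_dvd]
  exact le_antisymm (Nat.gcd_le_left _ hr0) (Nat.find_min' hex ⟨hg, dvd_yn_gcd a1 hr hm⟩)

theorem exists_yn_mul_eq_mul_modEq {s : ℕ} (hs : 0 < s) (t : ℕ) :
    ∃ u, yn a1 (s * t) = yn a1 s * u ∧ u ≡ t * xn a1 s ^ (t - 1) [MOD yn a1 s ^ 2] := by
  obtain ⟨u, hu⟩ := y_mul_dvd a1 s t
  refine ⟨u, hu, Nat.ModEq.mul_right_cancel' (yn_pos a1 hs).ne' ?_⟩
  rw [mul_comm u, ← hu, ← pow_succ]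
  exact (xy_modEq_yn a1 s t).2

theorem factorization_yn_mul_of_not_sq_dvd {p s t : ℕ} (hp : p.Prime) (hs : 0 < s)
    (hps : p ∣ yn a1 s) (ht : ¬ p ^ 2 ∣ t) :
    (yn a1 (s * t)).factorization p = (yn a1 s).factorization p + t.factorization p := by
  obtain ⟨u, hu, hmod⟩ := exists_yn_mul_eq_mul_modEq a1 hs t
  have hpx : ¬ p ∣ xn a1 s ^ (t - 1) := fun h =>
    not_dvd_xn_of_dvd_yn a1 hp hps (hp.dvd_of_dvd_pow h)
  have hsq : ¬ p ^ 2 ∣ t * xn a1 s ^ (t - 1) := fun h =>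
    ht ((Nat.Coprime.pow_left 2 (hp.coprime_iff_not_dvd.mpr hpx)).dvd_of_dvd_mul_right h)
  have hu_fac := Nat.factorization_eq_of_modEq hp (hmod.of_dvd (pow_dvd_pow_of_dvd hps 2)) hsq
  have ht0 : t ≠ 0 := by rintro rfl; exact ht (dvd_zero _)
  have hu0 : u ≠ 0 :=
    right_ne_zero_of_mul (hu ▸ (yn_pos a1 (Nat.mul_pos hs (Nat.pos_of_ne_zero ht0))).ne')
  rw [hu, Nat.factorization_mul (yn_pos a1 hs).ne' hu0, Finsupp.add_apply, hu_fac,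
    Nat.factorization_mul ht0 (pow_ne_zero _ (x_pos a1 s).ne'), Finsupp.add_apply,
    Nat.factorization_eq_zero_of_not_dvd hpx, add_zero]

theorem factorization_yn_mul {p s : ℕ} (hp : p.Prime) (hs : 0 < s) (hps : p ∣ yn a1 s) {t : ℕ}
    (ht : 0 < t) :
    (yn a1 (s * t)).factorization p = (yn a1 s).factorization p + t.factorization p := by
  induction t using Nat.strong_induction_on with
  | _ t ih =>
    by_cases hpt : p ∣ t
    · obtain ⟨t, rfl⟩ := hpt
      have ht0 : 0 < t := Nat.pos_of_mul_pos_left ht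
      have hsq : ¬ p ^ 2 ∣ p := Nat.not_dvd_of_pos_of_lt hp.pos (by nlinarith [hp.two_le])
      rw [mul_comm p t, ← mul_assoc, factorization_yn_mul_of_not_sq_dvd a1 hp
        (Nat.mul_pos hs ht0) (hps.trans (y_mul_dvd a1 s t)) hsq,
        ih t (by nlinarith [hp.two_le]) ht0, Nat.factorization_mul ht0.ne' hp.ne_zero]
      simp [hp.factorization_self, add_assoc]
    · exact factorization_yn_mul_of_not_sq_dvd a1 hp hs hps
        (fun h => hpt ((dvd_pow_self p two_ne_zero).trans h))

theorem factorization_yn_eq_ite {p r : ℕ} (hp : p.Prime) (hr : 0 < r)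
    (hrank : ∀ m, p ∣ yn a1 m ↔ r ∣ m) {m : ℕ} (hm : 0 < m) :
    (yn a1 m).factorization p =
      if r ∣ m then (yn a1 r).factorization p + (m / r).factorization p else 0 := by
  split_ifs with hrm
  · obtain ⟨k, rfl⟩ := hrm
    rw [factorization_yn_mul a1 hp hr ((hrank r).mpr dvd_rfl) (Nat.pos_of_mul_pos_left hm),
      Nat.mul_div_cancel_left k hr]
  · exact Nat.factorization_eq_zero_of_not_dvd fun h => hrm ((hrank m).mp h)

theorem sum_moebius_mul_factorization_yn_le {p n : ℕ} (hp : p.Prime) (hn : 0 < n)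
    (h : p ∣ yn a1 n → ∃ m, 0 < m ∧ m < n ∧ p ∣ yn a1 m) :
    ∑ d ∈ n.divisors, μ d * ((yn a1 (n / d)).factorization p : ℤ) ≤ n.factorization p := by
  by_cases hpn : p ∣ yn a1 n
  · obtain ⟨m, hm0, hmn, hpm⟩ := h hpn
    obtain ⟨r, hr0, hrm, hrank⟩ := exists_dvd_yn_iff_dvd a1 hm0 hpm
    refine sum_moebius_mul_factorization_le (e := (yn a1 r).factorization p)
      (w := fun k => (yn a1 k).factorization p) hp hn ((hrank n).mp hpn) (by omega)
      fun k hk => factorization_yn_eq_ite a1 hp hr0 hrank (Nat.pos_of_dvd_of_pos hk hn)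
  · have : ∀ d ∈ n.divisors, (yn a1 (n / d)).factorization p = 0 := fun d hd =>
      Nat.factorization_eq_zero_of_not_dvd fun h => hpn (h.trans
        ((y_dvd_iff a1 _ _).mpr (Nat.div_dvd_of_dvd (Nat.dvd_of_mem_divisors hd))))
    rw [sum_eq_zero fun d hd => by rw [this d hd, Nat.cast_zero, mul_zero]]
    positivity

theorem yn_mul_sub_inv {α : ℝ} (hα : α ≠ 0) (h : α + α⁻¹ = 2 * a) (n : ℕ) :
    (yn a1 n : ℝ) * (α - α⁻¹) = α ^ n - α⁻¹ ^ n := by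
  induction n using Nat.twoStepInduction with
  | zero => simp
  | one => simp
  | more n ih₀ ih₁ =>
    have hrec : (yn a1 (n + 2) : ℝ) = 2 * a * yn a1 (n + 1) - yn a1 n := by
      rw [eq_sub_iff_add_eq]
      exact_mod_cast yn_succ_succ a1 n
    have hαα : α * α⁻¹ = 1 := mul_inv_cancel₀ hα
    rw [hrec]
    linear_combination (2 * a : ℝ) * ih₁ - ih₀ - (α ^ (n + 1) - α⁻¹ ^ (n + 1)) * h
      + (α ^ n - α⁻¹ ^ n) * hαα

theorem yn_mul_sub_inv_eq_mul {α : ℝ} (hα : α ≠ 0) (h : α + α⁻¹ = 2 * a) (n : ℕ) :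
    (yn a1 n : ℝ) * (α - α⁻¹) = α ^ n * (1 - (α⁻¹ ^ 2) ^ n) := by
  have : α * α⁻¹ ^ 2 = α⁻¹ := by field_simp
  rw [yn_mul_sub_inv a1 hα h, mul_sub, mul_one, ← mul_pow, this]

theorem prod_yn_mul_sub_inv_le {α : ℝ} (hα : 1 ≤ α) (h : α + α⁻¹ = 2 * a) (s : Finset ℕ)
    (f : ℕ → ℕ) : ∏ d ∈ s, (yn a1 (f d) : ℝ) * (α - α⁻¹) ≤ α ^ ∑ d ∈ s, f d := by
  have hinv : 0 ≤ α⁻¹ ∧ α⁻¹ ≤ 1 := ⟨by positivity, inv_le_one_of_one_le₀ hα⟩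
  rw [← prod_pow_eq_pow_sum]
  refine prod_le_prod (fun d _ => mul_nonneg (Nat.cast_nonneg _) (by linarith)) fun d _ => ?_
  rw [yn_mul_sub_inv a1 (by positivity) h]
  linarith [pow_nonneg hinv.1 (f d)]

theorem mul_pow_sum_le_prod_yn_mul_sub_inv {α : ℝ} (hα : 4 ≤ α) (h : α + α⁻¹ = 2 * a) {n : ℕ}
    {s : Finset ℕ} (hs : s ⊆ n.divisors) :
    14 / 15 * α ^ ∑ d ∈ s, n / d ≤ ∏ d ∈ s, (yn a1 (n / d) : ℝ) * (α - α⁻¹) := by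
  set q := α⁻¹ ^ 2
  have hq0 : 0 ≤ q := by positivity
  have hq : q ≤ 1 / 16 := by
    have : α⁻¹ ≤ 1 / 4 := by rw [one_div]; exact inv_anti₀ (by norm_num) hα
    have : 0 ≤ α⁻¹ := by positivity
    nlinarith
  have hsum : ∑ d ∈ s, q ^ (n / d) ≤ 1 / 15 :=
    calc ∑ d ∈ s, q ^ (n / d) ≤ ∑ d ∈ n.divisors, q ^ (n / d) :=
          sum_le_sum_of_subset_of_nonneg hs fun _ _ _ => by positivity
      _ = ∑ d ∈ n.divisors, q ^ d := Nat.sum_div_divisors n (q ^ ·)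
      _ ≤ ∑ d ∈ Ico 1 (n + 1), q ^ d :=
          sum_le_sum_of_subset_of_nonneg (filter_subset _ _) fun _ _ _ => by positivity
      _ ≤ q ^ 1 / (1 - q) := geom_sum_Ico_le_of_lt_one hq0 (by linarith)
      _ ≤ 1 / 15 := by rw [div_le_iff₀ (by linarith)]; linarith
  have hprod : 14 / 15 ≤ ∏ d ∈ s, (1 - q ^ (n / d)) :=
    (one_sub_sum_le_prod_one_sub s (fun _ _ => by positivity)
      fun _ _ => pow_le_one₀ hq0 (by linarith)).trans' (by linarith)
  rw [prod_congr rfl fun d _ => yn_mul_sub_inv_eq_mul a1 (by positivity) h (n / d),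
    prod_mul_distrib, prod_pow_eq_pow_sum, mul_comm]
  exact mul_le_mul_of_nonneg_left hprod (by positivity)

theorem mul_prod_yn_lt_prod_yn {α : ℝ} (hα : 4 ≤ α) (h : α + α⁻¹ = 2 * a) {n : ℕ}
    (hn : 2 ≤ n) :
    n * ∏ d ∈ n.divisors with μ d = -1, yn a1 (n / d) <
      ∏ d ∈ n.divisors with μ d = 1, yn a1 (n / d) := by
  have hc : 0 < α - α⁻¹ := by
    have := inv_le_one_of_one_le₀ (by linarith : (1 : ℝ) ≤ α)
    linarith
  have hφ : (n : ℝ) < 14 / 15 * α ^ φ n := by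
    have : (2 * n : ℝ) ≤ 4 ^ φ n := by exact_mod_cast Nat.two_mul_le_four_pow_totient (by omega)
    have : (4 : ℝ) ^ φ n ≤ α ^ φ n := pow_le_pow_left₀ (by norm_num) hα _
    have : (2 : ℝ) ≤ n := by exact_mod_cast hn
    linarith
  have key : (n : ℝ) * ∏ d ∈ n.divisors with μ d = -1, (yn a1 (n / d) : ℝ) * (α - α⁻¹) <
      ∏ d ∈ n.divisors with μ d = 1, (yn a1 (n / d) : ℝ) * (α - α⁻¹) :=
    calc _ ≤ (n : ℝ) * α ^ ∑ d ∈ n.divisors with μ d = -1, n / d :=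
          mul_le_mul_of_nonneg_left (prod_yn_mul_sub_inv_le a1 (by linarith) h _ _)
            (by positivity)
      _ < 14 / 15 * α ^ φ n * α ^ ∑ d ∈ n.divisors with μ d = -1, n / d :=
          mul_lt_mul_of_pos_right hφ (by positivity)
      _ = 14 / 15 * α ^ ∑ d ∈ n.divisors with μ d = 1, n / d := by
          rw [sum_filter_moebius_eq_one_div, pow_add]; ring
      _ ≤ _ := mul_pow_sum_le_prod_yn_mul_sub_inv a1 hα h (filter_subset _ _)
  rw [prod_mul_distrib, prod_mul_distrib, prod_const, prod_const,
    card_filter_moebius_eq_one_eq (show n ≠ 1 by omega), ← mul_assoc] at key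
  exact_mod_cast lt_of_mul_lt_mul_right key (by positivity)

theorem exists_four_le_add_inv_eq (ha : 3 ≤ a) : ∃ α : ℝ, 4 ≤ α ∧ α + α⁻¹ = 2 * a := by
  have ha' : (3 : ℝ) ≤ a := by exact_mod_cast ha
  set r := √((a : ℝ) ^ 2 - 1)
  have hr : r ^ 2 = (a : ℝ) ^ 2 - 1 := Real.sq_sqrt (by nlinarith)
  have hr0 : 0 ≤ r := Real.sqrt_nonneg _
  have hinv : ((a : ℝ) + r)⁻¹ = a - r := inv_eq_of_mul_eq_one_right (by linear_combination -hr)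
  exact ⟨a + r, by nlinarith, by rw [hinv]; ring⟩

theorem exists_prime_dvd_yn_not_dvd (ha : 3 ≤ a) {n : ℕ} (hn : 1 < n) :
    ∃ p, p.Prime ∧ p ∣ yn a1 n ∧ ∀ m, 0 < m → m < n → ¬ p ∣ yn a1 m := by
  by_contra! h
  obtain ⟨α, hα, hαa⟩ := exists_four_le_add_inv_eq ha
  have hy : ∀ d ∈ n.divisors, yn a1 (n / d) ≠ 0 := fun d hd =>
    (yn_pos a1 (Nat.div_pos (Nat.divisor_le hd) (Nat.pos_of_mem_divisors hd))).ne'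
  have hdvd := prod_filter_moebius_dvd hy (by omega) fun p hp =>
    sum_moebius_mul_factorization_yn_le a1 hp (by omega) (h p hp)
  have hpos : 0 < n * ∏ d ∈ n.divisors with μ d = -1, yn a1 (n / d) :=
    Nat.pos_of_ne_zero (mul_ne_zero (by omega) (prod_ne_zero_iff.mpr fun d hd =>
      hy d (mem_filter.mp hd).1))
  exact (mul_prod_yn_lt_prod_yn a1 hα hαa hn).not_ge (Nat.le_of_dvd hpos hdvd)

end Pell

theorem B_eq_yn (n : ℕ) : B n = Pell.yn (by norm_num : 1 < 3) n := by
  induction n using Nat.twoStepInduction with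
  | zero => rfl
  | one => rfl
  | more n ih₀ ih₁ =>
    have := Pell.yn_succ_succ (by norm_num : 1 < 3) n
    simp only [B, ih₀, ih₁]
    omega

theorem stmt4 : ∀ n : ℕ, 1 < n →
    ∃ p : ℕ, p.Prime ∧ p ∣ B n ∧ ∀ m : ℕ, 0 < m → m < n → ¬ p ∣ B m := by
  intro n hn
  simp only [B_eq_yn]
  exact Pell.exists_prime_dvd_yn_not_dvd _ le_rfl hn
end
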